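/- arXiv:2506.00882 — 3 statements merged into one kernel-verified Lean document; each statement's English description precedes it below -/
import Mathlib

section
/- Let a, b, c, d ∈ ℤ≥0, p₁ = min{a + b, a + d, c + d}, p₂ = min{a + 2b, a + 2d, c + 2d}. Then the 4-move transition map Ψ(a, b, c, d) = (b + c + d − p₁, 2p₁ − p₂, p₂ − p₁, a + 2b + c − p₂) has all entries nonnegative. -/
/-- All entries of the 4-move transition map
`Ψ(a,b,c,d) = (b+c+d−p₁, 2p₁−p₂, p₂−p₁, a+2b+c−p₂)` are nonnegative
for nonnegative `a, b, c, d`. -/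
theorem psi4_nonneg (a b c d : ℤ) (ha : 0 ≤ a) (hb : 0 ≤ b) (hc : 0 ≤ c) (hd : 0 ≤ d) :
    let p₁ := min (a + b) (min (a + d) (c + d))
    let p₂ := min (a + 2 * b) (min (a + 2 * d) (c + 2 * d))
    0 ≤ b + c + d - p₁ ∧ 0 ≤ 2 * p₁ - p₂ ∧ 0 ≤ p₂ - p₁ ∧ 0 ≤ a + 2 * b + c - p₂ := by
  intro p₁ p₂
  simp only [p₁, p₂]
  omega
end

section
/- Define Ψ₁(a, b, c, d) = (b + c + d − p₁, 2p₁ − p₂, p₂ − p₁, a + 2b + c − p₂) with p₁ = min{a+b, a+d, c+d}, p₂ = min{a+2b, a+2d, c+2d}, and Ψ₂(a, b, c, d) = (b + 2c + d − q₂, q₂ − q₁, 2q₁ − q₂, a + b + c − q₁) with q₁ = min{a+b, a+d, c+d}, q₂ = min{2a+b, 2a+d, 2c+d}. Then Ψ₂ ∘ Ψ₁ = id on ℤ≥0⁴. -/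
/-- The 4-move transition map in the case `(c_{ij}, c_{ji}) = (−1, −2)`. -/
def Psi1 : ℕ × ℕ × ℕ × ℕ → ℕ × ℕ × ℕ × ℕ := fun t =>
  let a := t.1; let b := t.2.1; let c := t.2.2.1; let d := t.2.2.2
  let p₁ := min (a + b) (min (a + d) (c + d))
  let p₂ := min (a + 2 * b) (min (a + 2 * d) (c + 2 * d))
  (b + c + d - p₁, 2 * p₁ - p₂, p₂ - p₁, a + 2 * b + c - p₂)

/-- The 4-move transition map in the case `(c_{ij}, c_{ji}) = (−2, −1)`. -/
def Psi2 : ℕ × ℕ × ℕ × ℕ → ℕ × ℕ × ℕ × ℕ := fun t =>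
  let a := t.1; let b := t.2.1; let c := t.2.2.1; let d := t.2.2.2
  let q₁ := min (a + b) (min (a + d) (c + d))
  let q₂ := min (2 * a + b) (min (2 * a + d) (2 * c + d))
  (b + 2 * c + d - q₂, q₂ - q₁, 2 * q₁ - q₂, a + b + c - q₁)

set_option maxHeartbeats 4000000 in
/-- Applying the 4-move twice returns to the original reduced word:
`Ψ₂ ∘ Ψ₁ = id`. -/
theorem psi2_comp_psi1 : Psi2 ∘ Psi1 = id := by
  funext t
  obtain ⟨a, b, c, d⟩ := t
  simp only [Function.comp_apply, Psi1, Psi2, id_eq, Prod.mk.injEq]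
  omega
end

section
/- Let Λ be a skew-symmetric integer K × K matrix and B an integer K × K^ex matrix such that (Λ, B) is compatible, i.e., Σ_{t ∈ K} λ_{it} b_{tj} = −2 d'_j δ_{ij} for all i ∈ K, j ∈ K^ex, with d'_j positive integers. Then for any k ∈ K^ex, the mutated pair (μ_k(Λ), μ_k(B)) defined by the quantum cluster mutation formulas is again compatible with the same integers d'_j. -/
lemma mut_sign_max (a c : ℤ) :
    (if a < 0 then -1 else 1) * max (a * c) 0 = max 0 (-a) * c + a * max 0 c := by
  rcases lt_or_ge a 0 with ha | ha <;> rcases le_or_gt c 0 with hc | hc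
  · rw [if_pos ha, max_eq_left (by nlinarith : (0:ℤ) ≤ a * c),
      max_eq_right (by linarith : (0:ℤ) ≤ -a), max_eq_left hc]; ring
  · rw [if_pos ha, max_eq_right (by nlinarith : a * c ≤ 0),
      max_eq_right (by linarith : (0:ℤ) ≤ -a), max_eq_right hc.le]; ring
  · rw [if_neg (not_lt.mpr ha), max_eq_right (by nlinarith : a * c ≤ 0),
      max_eq_left (by linarith : -a ≤ 0), max_eq_left hc]; ring
  · rw [if_neg (not_lt.mpr ha), max_eq_left (by positivity : (0:ℤ) ≤ a * c),
      max_eq_left (by linarith : -a ≤ 0), max_eq_right hc.le]; ring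

/-- Berenstein–Zelevinsky compatibility invariance: mutation of a compatible
pair `(Λ, B)` in an exchangeable direction `k` is again a compatible pair,
with the same symmetrizing integers `d'`. -/
theorem mutation_preserves_compatibility (K : Type*) [Fintype K] [DecidableEq K]
    (ex : K → Prop) [DecidablePred ex]
    (Λ B : K → K → ℤ) (d' : K → ℤ)
    (hd : ∀ j, ex j → 0 < d' j)
    (hskew : ∀ i j, Λ i j = -Λ j i)
    (hcompat : ∀ i j, ex j → ∑ t, Λ i t * B t j = if i = j then -2 * d' j else 0)
    (k : K) (hk : ex k) :
    let μB : K → K → ℤ := fun i j =>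
      if i = k ∨ j = k then -B i j
      else B i j + (if B i k < 0 then -1 else 1) * max (B i k * B k j) 0
    let μΛ : K → K → ℤ := fun i j =>
      if i = k ∧ j ≠ k then -Λ k j + ∑ l, max 0 (-B l k) * Λ l j
      else if j = k ∧ i ≠ k then -Λ i k + ∑ l, max 0 (-B l k) * Λ i l
      else Λ i j
    (∀ i j, μΛ i j = -μΛ j i) ∧
      (∀ i j, ex j → ∑ t, μΛ i t * μB t j = if i = j then -2 * d' j else 0) := by
  intro μB μΛ
  have hΛdiag : ∀ i, Λ i i = 0 := fun i => by have := hskew i i; omega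
  -- the "delta" sums
  have hdelta : ∀ (f : K → ℤ) (c : ℤ) (jj : K),
      ∑ l, f l * (if l = jj then c else 0) = f jj * c := by
    intro f c jj
    simp [mul_ite, mul_zero]
  -- relation d'_j B_jk = -(d'_i B_ij) for exchangeable i, j
  have hBrel : ∀ i j, ex i → ex j → d' j * B j i = -(d' i * B i j) := by
    intro i j hi hj
    have h1 : ∑ t, B t i * ∑ s, Λ t s * B s j = -2 * d' j * B j i := by
      calc ∑ t, B t i * ∑ s, Λ t s * B s j
          = ∑ t, B t i * (if t = j then -2 * d' j else 0) :=
            Finset.sum_congr rfl fun t _ => by rw [hcompat t j hj]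
        _ = -2 * d' j * B j i := by rw [hdelta]; ring
    have h2 : ∑ t, B t i * ∑ s, Λ t s * B s j = 2 * d' i * B i j := by
      calc ∑ t, B t i * ∑ s, Λ t s * B s j
          = ∑ t, ∑ s, B t i * (Λ t s * B s j) :=
            Finset.sum_congr rfl fun t _ => Finset.mul_sum _ _ _
        _ = ∑ s, ∑ t, B t i * (Λ t s * B s j) := Finset.sum_comm
        _ = ∑ s, (∑ t, Λ s t * B t i) * (-B s j) := by
            refine Finset.sum_congr rfl fun s _ => ?_
            rw [Finset.sum_mul]
            exact Finset.sum_congr rfl fun t _ => by rw [hskew t s]; ring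
        _ = ∑ s, (if s = i then -2 * d' i else 0) * (-B s j) :=
            Finset.sum_congr rfl fun s _ => by rw [hcompat s i hi]
        _ = ∑ s, (-B s j) * (if s = i then -2 * d' i else 0) :=
            Finset.sum_congr rfl fun s _ => by ring
        _ = 2 * d' i * B i j := by rw [hdelta]; ring
    linarith [h1, h2]
  have hBkk : B k k = 0 := by
    have h := hBrel k k hk hk
    have hdk := hd k hk
    have h0 : d' k * B k k = 0 := by linarith
    rcases mul_eq_zero.mp h0 with h' | h'
    · exact absurd h' (by linarith)
    · exact h'
  have hPk : max 0 (-B k k) = 0 := by rw [hBkk]; simp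
  -- double sum against a skew matrix vanishes
  have hskewzero : ∀ f : K → ℤ, ∑ t, (∑ l, f l * Λ l t) * f t = 0 := by
    intro f
    have h : ∑ t, (∑ l, f l * Λ l t) * f t = -∑ t, (∑ l, f l * Λ l t) * f t := by
      calc ∑ t, (∑ l, f l * Λ l t) * f t
          = ∑ t, ∑ l, f l * Λ l t * f t :=
            Finset.sum_congr rfl fun t _ => Finset.sum_mul _ _ _
        _ = ∑ l, ∑ t, f l * Λ l t * f t := Finset.sum_comm
        _ = -∑ l, ∑ t, f t * Λ t l * f l := by
            rw [← Finset.sum_neg_distrib]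
            refine Finset.sum_congr rfl fun l _ => ?_
            rw [← Finset.sum_neg_distrib]
            exact Finset.sum_congr rfl fun t _ => by rw [hskew l t]; ring
        _ = -∑ t, (∑ l, f l * Λ l t) * f t := by
            congr 1
            exact Finset.sum_congr rfl fun t _ => (Finset.sum_mul _ _ _).symm
    linarith
  -- the key double-sum contraction
  have hdouble : ∀ (f : K → ℤ) (jj : K), ex jj →
      ∑ t, (∑ l, f l * Λ l t) * B t jj = f jj * (-2 * d' jj) := by
    intro f jj hjj
    calc ∑ t, (∑ l, f l * Λ l t) * B t jj
        = ∑ t, ∑ l, f l * (Λ l t * B t jj) := by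
          refine Finset.sum_congr rfl fun t _ => ?_
          rw [Finset.sum_mul]; exact Finset.sum_congr rfl fun l _ => by ring
      _ = ∑ l, ∑ t, f l * (Λ l t * B t jj) := Finset.sum_comm
      _ = ∑ l, f l * ∑ t, Λ l t * B t jj :=
          Finset.sum_congr rfl fun l _ => (Finset.mul_sum _ _ _).symm
      _ = ∑ l, f l * (if l = jj then -2 * d' jj else 0) :=
          Finset.sum_congr rfl fun l _ => by rw [hcompat l jj hjj]
      _ = f jj * (-2 * d' jj) := hdelta _ _ _
  constructor
  · -- skew symmetry of μΛ
    intro i j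
    by_cases hi : i = k <;> by_cases hj : j = k
    · simp only [μΛ, if_neg (by tauto : ¬(i = k ∧ j ≠ k)),
        if_neg (by tauto : ¬(j = k ∧ i ≠ k)), if_neg (by tauto : ¬(j = k ∧ i ≠ k)),
        if_neg (by tauto : ¬(i = k ∧ j ≠ k))]
      exact hskew i j
    · simp only [μΛ, if_pos (⟨hi, hj⟩ : i = k ∧ j ≠ k),
        if_neg (by tauto : ¬(j = k ∧ i ≠ k)),
        if_pos (⟨hi, hj⟩ : i = k ∧ j ≠ k)]
      have h : ∑ l, max 0 (-B l k) * Λ l j = -∑ l, max 0 (-B l k) * Λ j l := by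
        rw [← Finset.sum_neg_distrib]
        exact Finset.sum_congr rfl fun l _ => by rw [hskew l j]; ring
      rw [h, hskew k j]; ring
    · simp only [μΛ, if_neg (by tauto : ¬(i = k ∧ j ≠ k)),
        if_pos (⟨hj, hi⟩ : j = k ∧ i ≠ k),
        if_pos (⟨hj, hi⟩ : j = k ∧ i ≠ k)]
      have h : ∑ l, max 0 (-B l k) * Λ i l = -∑ l, max 0 (-B l k) * Λ l i := by
        rw [← Finset.sum_neg_distrib]
        exact Finset.sum_congr rfl fun l _ => by rw [hskew l i]; ring
      rw [h, hskew i k]; ring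
    · simp only [μΛ, if_neg (by tauto : ¬(i = k ∧ j ≠ k)),
        if_neg (by tauto : ¬(j = k ∧ i ≠ k)),
        if_neg (by tauto : ¬(j = k ∧ i ≠ k)), if_neg (by tauto : ¬(i = k ∧ j ≠ k))]
      exact hskew i j
  · -- compatibility of the mutated pair
    intro i j hj
    by_cases hjk : j = k
    · -- column k of μB
      have hμBk : ∀ t, μB t j = -B t j := fun t => by simp [μB, hjk]
      by_cases hik : i = k
      · rw [if_pos (hik.trans hjk.symm)]
        have hstep : ∑ t, μΛ i t * μB t j
            = ∑ t, (-Λ k t + ∑ l, max 0 (-B l k) * Λ l t) * (-B t j) := by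
          refine Finset.sum_congr rfl fun t _ => ?_
          rw [hμBk t]
          by_cases htk : t = k
          · have h1 : μΛ i t = Λ i t := by
              simp only [μΛ, if_neg (by tauto : ¬(i = k ∧ t ≠ k)),
                if_neg (by tauto : ¬(t = k ∧ i ≠ k))]
            rw [h1, htk, hjk, hBkk, hik]; ring
          · have h1 : μΛ i t = -Λ k t + ∑ l, max 0 (-B l k) * Λ l t := by
              simp only [μΛ, if_pos (⟨hik, htk⟩ : i = k ∧ t ≠ k)]
            rw [h1]
        rw [hstep]
        have hsplit : ∑ t, (-Λ k t + ∑ l, max 0 (-B l k) * Λ l t) * (-B t j)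
            = (∑ t, Λ k t * B t j) - ∑ t, (∑ l, max 0 (-B l k) * Λ l t) * B t j := by
          rw [← Finset.sum_sub_distrib]
          exact Finset.sum_congr rfl fun t _ => by ring
        rw [hsplit, hcompat k j hj, if_pos hjk.symm, hdouble _ j hj]
        have : max 0 (-B j k) = 0 := by rw [hjk]; exact hPk
        rw [this]; ring
      · rw [if_neg (fun h => hik (h.trans hjk))]
        have hstep : ∑ t, μΛ i t * μB t j = ∑ t, -(Λ i t * B t j) := by
          refine Finset.sum_congr rfl fun t _ => ?_
          rw [hμBk t]
          by_cases htk : t = k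
          · rw [htk, hjk, hBkk]; ring
          · have h1 : μΛ i t = Λ i t := by
              simp only [μΛ, if_neg (by tauto : ¬(i = k ∧ t ≠ k)),
                if_neg (by tauto : ¬(t = k ∧ i ≠ k))]
            rw [h1]; ring
        rw [hstep, Finset.sum_neg_distrib, hcompat i j hj,
          if_neg (fun h => hik (h.trans hjk))]
        ring
    · -- column j ≠ k of μB
      have hμBj : ∀ t, t ≠ k → μB t j =
          B t j + max 0 (-B t k) * B k j + B t k * max 0 (B k j) := by
        intro t ht
        simp only [μB, if_neg (by tauto : ¬(t = k ∨ j = k))]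
        rw [mut_sign_max]; ring
      have hμBkj : μB k j = -B k j := by simp [μB]
      rw [← Finset.add_sum_erase _ _ (Finset.mem_univ k)]
      by_cases hik : i = k
      · rw [if_neg (fun h => hjk (hik ▸ h.symm))]
        have hμΛik : μΛ i k = 0 := by
          simp [μΛ, hik, hΛdiag]
        rw [hμΛik, zero_mul, zero_add]
        have hstep : ∑ t ∈ Finset.univ.erase k, μΛ i t * μB t j
            = ∑ t ∈ Finset.univ.erase k,
              (-Λ k t + ∑ l, max 0 (-B l k) * Λ l t)
                * (B t j + max 0 (-B t k) * B k j + B t k * max 0 (B k j)) := by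
          refine Finset.sum_congr rfl fun t ht => ?_
          have htk : t ≠ k := (Finset.mem_erase.mp ht).1
          have h1 : μΛ i t = -Λ k t + ∑ l, max 0 (-B l k) * Λ l t := by
            simp only [μΛ, if_pos (⟨hik, htk⟩ : i = k ∧ t ≠ k)]
          rw [h1, hμBj t htk]
        rw [hstep, Finset.sum_erase_eq_sub (Finset.mem_univ k)]
        have hgk : (-Λ k k + ∑ l, max 0 (-B l k) * Λ l k)
              * (B k j + max 0 (-B k k) * B k j + B k k * max 0 (B k j))
            = (∑ l, max 0 (-B l k) * Λ l k) * B k j := by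
          rw [hΛdiag k, hPk, hBkk]; ring
        have hexp : ∑ t, (-Λ k t + ∑ l, max 0 (-B l k) * Λ l t)
              * (B t j + max 0 (-B t k) * B k j + B t k * max 0 (B k j))
            = (∑ t, -(Λ k t * B t j))
              + (∑ t, -(Λ k t * max 0 (-B t k))) * B k j
              + (∑ t, -(Λ k t * B t k)) * max 0 (B k j)
              + (∑ t, (∑ l, max 0 (-B l k) * Λ l t) * B t j)
              + (∑ t, (∑ l, max 0 (-B l k) * Λ l t) * max 0 (-B t k)) * B k j
              + (∑ t, (∑ l, max 0 (-B l k) * Λ l t) * B t k) * max 0 (B k j) := by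
          rw [Finset.sum_mul, Finset.sum_mul, Finset.sum_mul, Finset.sum_mul,
            ← Finset.sum_add_distrib, ← Finset.sum_add_distrib,
            ← Finset.sum_add_distrib, ← Finset.sum_add_distrib,
            ← Finset.sum_add_distrib]
          exact Finset.sum_congr rfl fun t _ => by ring
        rw [hexp, hgk]
        have e1 : ∑ t, -(Λ k t * B t j) = 0 := by
          rw [Finset.sum_neg_distrib, hcompat k j hj,
            if_neg (fun h => hjk h.symm)]; ring
        have e3 : ∑ t, -(Λ k t * B t k) = 2 * d' k := by
          rw [Finset.sum_neg_distrib, hcompat k k hk, if_pos rfl]; ring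
        have e4 : ∑ t, (∑ l, max 0 (-B l k) * Λ l t) * B t j
            = max 0 (-B j k) * (-2 * d' j) := hdouble _ j hj
        have e5 : ∑ t, (∑ l, max 0 (-B l k) * Λ l t) * max 0 (-B t k) = 0 :=
          hskewzero _
        have e6 : ∑ t, (∑ l, max 0 (-B l k) * Λ l t) * B t k = 0 := by
          rw [hdouble _ k hk, hPk]; ring
        have e2 : ∑ l, max 0 (-B l k) * Λ l k = ∑ t, -(Λ k t * max 0 (-B t k)) :=
          Finset.sum_congr rfl fun l _ => by rw [hskew l k]; ring
        rw [e1, e3, e4, e5, e6, e2]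
        have hcancel : 2 * d' k * max 0 (B k j) + max 0 (-B j k) * (-2 * d' j) = 0 := by
          have hrel := hBrel j k hj hk
          have hdj := hd j hj
          have hdk := hd k hk
          rcases le_or_gt (B k j) 0 with h | h
          · have hjk0 : 0 ≤ B j k := by nlinarith
            rw [max_eq_left h, max_eq_left (by linarith : -B j k ≤ 0)]; ring
          · have hjk0 : B j k ≤ 0 := by nlinarith
            rw [max_eq_right h.le, max_eq_right (by linarith : 0 ≤ -B j k)]
            linear_combination 2 * hrel
        linarith [hcancel]
      · have hμΛik : μΛ i k = -Λ i k + ∑ l, max 0 (-B l k) * Λ i l := by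
          show (if i = k ∧ k ≠ k then -Λ k k + ∑ l, max 0 (-B l k) * Λ l k
            else if k = k ∧ i ≠ k then -Λ i k + ∑ l, max 0 (-B l k) * Λ i l
            else Λ i k) = -Λ i k + ∑ l, max 0 (-B l k) * Λ i l
          rw [if_neg (show ¬(i = k ∧ k ≠ k) from fun h => h.2 rfl),
            if_pos (show (k = k ∧ i ≠ k) from ⟨rfl, hik⟩)]
        have hstep : ∑ t ∈ Finset.univ.erase k, μΛ i t * μB t j
            = ∑ t ∈ Finset.univ.erase k,
              Λ i t * (B t j + max 0 (-B t k) * B k j + B t k * max 0 (B k j)) := by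
          refine Finset.sum_congr rfl fun t ht => ?_
          have htk : t ≠ k := (Finset.mem_erase.mp ht).1
          have h1 : μΛ i t = Λ i t := by
            simp only [μΛ, if_neg (by tauto : ¬(i = k ∧ t ≠ k)),
              if_neg (by tauto : ¬(t = k ∧ i ≠ k))]
          rw [h1, hμBj t htk]
        rw [hμΛik, hμBkj, hstep, Finset.sum_erase_eq_sub (Finset.mem_univ k)]
        have hexp : ∑ t, Λ i t * (B t j + max 0 (-B t k) * B k j + B t k * max 0 (B k j))
            = (∑ t, Λ i t * B t j)
              + (∑ t, Λ i t * max 0 (-B t k)) * B k j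
              + (∑ t, Λ i t * B t k) * max 0 (B k j) := by
          rw [Finset.sum_mul, Finset.sum_mul, ← Finset.sum_add_distrib,
            ← Finset.sum_add_distrib]
          exact Finset.sum_congr rfl fun t _ => by ring
        have hgk : Λ i k * (B k j + max 0 (-B k k) * B k j + B k k * max 0 (B k j))
            = Λ i k * B k j := by rw [hPk, hBkk]; ring
        rw [hexp, hgk, hcompat i j hj, hcompat i k hk, if_neg hik]
        have hsw : ∑ l, max 0 (-B l k) * Λ i l = ∑ t, Λ i t * max 0 (-B t k) :=
          Finset.sum_congr rfl fun l _ => by ring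
        rw [hsw]
        ring
end
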